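/- arXiv:2102.11317 — 8 statements merged into one kernel-verified Lean document; each statement's English description precedes it below -/
import Mathlib

section
/- Let T be an essentially small triangulated category with the topology on Spec△(T) whose closed sets are the sets Z(E) = {P prime thick | P ∩ E = ∅} for E a family of objects. Then for any prime thick subcategory P, the closure of {P} equals {Q ∈ Spec△(T) | Q ⊆ P}. In particular, Spec△(T) is a T0-space. -/
open CategoryTheory Limits Pretriangulated

universe v u

variable (C : Type u) [Category.{v} C] [Preadditive C] [HasZeroObject C]
  [HasShift C ℤ] [∀ n : ℤ, (shiftFunctor C n).Additive] [Pretriangulated C]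

/-- A thick subcategory of a (pre)triangulated category, modelled as a set of objects
closed under isomorphisms, zero objects, shifts, extensions and direct summands. -/
structure ThickSubcat : Type (max u v) where
  set : Set C
  mem_of_iso : ∀ {X Y : C}, (X ≅ Y) → X ∈ set → Y ∈ set
  zero_mem : ∀ Z : C, IsZero Z → Z ∈ set
  shift_mem : ∀ (X : C) (n : ℤ), X ∈ set → X⟦n⟧ ∈ set
  ext_mem : ∀ T : Triangle C, T ∈ (distTriang C) → T.obj₁ ∈ set → T.obj₃ ∈ set → T.obj₂ ∈ set
  summand_mem : ∀ (X Y : C) (i : Y ⟶ X) (r : X ⟶ Y), i ≫ r = 𝟙 Y → X ∈ set → Y ∈ set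

lemma ThickSubcat.set_injective : Function.Injective (ThickSubcat.set (C := C)) := by
  rintro ⟨s, _, _, _, _, _⟩ ⟨t, _, _, _, _, _⟩ h
  cases h; rfl

instance : PartialOrder (ThickSubcat C) :=
  PartialOrder.lift ThickSubcat.set (ThickSubcat.set_injective C)

/-- A thick subcategory `P` is *prime* if there is a unique minimal element among the
thick subcategories properly containing `P`. -/
def IsPrimeThick (P : ThickSubcat C) : Prop :=
  ∃! X : ThickSubcat C, Minimal (fun Y : ThickSubcat C => P < Y) X

/-- The spectrum: the set of prime thick subcategories. -/
def SpecTri := {P : ThickSubcat C // IsPrimeThick C P}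

/-- The support of an object `M`. -/
def suppObj (M : C) : Set (SpecTri C) := {P | M ∉ P.1.set}

/-- The topology on the spectrum, with closed basis the supports `suppObj M`. -/
instance : TopologicalSpace (SpecTri C) :=
  TopologicalSpace.generateFrom {U | ∃ M : C, U = (suppObj C M)ᶜ}

lemma mem_closure_singleton_iff (P Q : SpecTri C) :
    Q ∈ closure ({P} : Set (SpecTri C)) ↔ Q.1 ≤ P.1 := by
  constructor
  · intro h M hM
    have hopen : IsOpen ((suppObj C M)ᶜ) :=
      TopologicalSpace.isOpen_generateFrom_of_mem ⟨M, rfl⟩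
    have hQ : Q ∈ (suppObj C M)ᶜ := fun hc => hc hM
    obtain ⟨x, hx1, hx2⟩ := mem_closure_iff.mp h _ hopen hQ
    rw [Set.mem_singleton_iff] at hx2
    subst hx2
    exact not_not.mp hx1
  · intro hle
    rw [mem_closure_iff]
    intro o ho hQ
    refine ⟨P, ?_, rfl⟩
    revert hQ
    induction ho with
    | basic U hU =>
      obtain ⟨M, rfl⟩ := hU
      intro hQ
      exact fun hc => hc (hle (not_not.mp hQ))
    | univ => exact fun _ => trivial
    | inter U V _ _ ihU ihV => exact fun h => ⟨ihU h.1, ihV h.2⟩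
    | sUnion S _ ih => rintro ⟨U, hUS, hQU⟩; exact ⟨U, hUS, ih U hUS hQU⟩

theorem stmt4' (P : SpecTri C) :
    closure {P} = {Q : SpecTri C | Q.1 ≤ P.1} ∧ T0Space (SpecTri C) := by
  constructor
  · ext Q; exact mem_closure_singleton_iff C P Q
  · refine t0Space_iff_inseparable _ |>.mpr fun x y h => ?_
    have h1 : x.1 ≤ y.1 := (mem_closure_singleton_iff C y x).mp
      (specializes_iff_mem_closure.mp h.specializes')
    have h2 : y.1 ≤ x.1 := (mem_closure_singleton_iff C x y).mp
      (specializes_iff_mem_closure.mp h.specializes)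
    exact Subtype.ext (le_antisymm h1 h2)

/-- In `Spec△(T)` with the topology whose closed sets are the `Z(E)`
(equivalently, generated by the closed basis of supports), the closure of a point `{P}`
is `{Q ∈ Spec△(T) | Q ⊆ P}`; in particular `Spec△(T)` is a `T₀`-space. -/
theorem stmt4 (P : SpecTri C) :
    closure {P} = {Q : SpecTri C | Q.1 ≤ P.1} ∧ T0Space (SpecTri C) := by
  exact stmt4' C P
end

section
/- Let R be a commutative noetherian ring, p a prime ideal, T an R-linear triangulated category, and S_T(p) = {M ∈ T | a·1_M = 0 for some a ∉ p}. Then the canonical functor Q : T → T/S_T(p) to the Verdier quotient induces, for all objects M, N, an isomorphism of R-modules Hom_T(M,N)_p ≅ Hom_{T/S_T(p)}(M,N), sending f/a to Q(a·1_N)^{-1} ∘ Q(f). -/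
/-! A morphism whose cone is killed by `a ∉ p` is invertible up to the scalar `a * a`: there is a
morphism back whose composites with it are `(a * a) • 𝟙` on both sides. Conversely the cone of such
a morphism is killed by `a * a`. So `T/S_T(p)` is the localization at the morphisms invertible up to
a scalar outside `p`; in any `R`-linear category this class has a left calculus of fractions in
which a fraction `f / s` may be rewritten with denominator `a • 𝟙`, which identifies the localized
Hom-sets with `Hom_T(M, N)_p`. -/

open CategoryTheory Limits Pretriangulated

universe v u

variable (C : Type u) [Category.{v} C] [Preadditive C] [HasZeroObject C]
  [HasShift C ℤ] [∀ n : ℤ, (shiftFunctor C n).Additive] [Pretriangulated C]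

/-- The class of morphisms of `C` whose cone lies in `S_T(p)`
(the thick subcategory of objects killed by some `a ∉ p`). -/
def coneW (R : Type*) [CommRing R] (p : Ideal R) [p.IsPrime] [CategoryTheory.Linear R C] :
    MorphismProperty C :=
  fun X Y f => ∃ (Z : C) (g : Y ⟶ Z) (h : Z ⟶ X⟦(1 : ℤ)⟧),
    Triangle.mk f g h ∈ (distTriang C) ∧ ∃ a ∈ p.primeCompl, a • (𝟙 Z) = 0

namespace CategoryTheory

lemma Localization.preservesZeroMorphisms_of_hasLeftCalculusOfFractions
    {B D : Type*} [Category B] [Category D] [HasZeroMorphisms B] [HasZeroMorphisms D]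
    (L : B ⥤ D) (W : MorphismProperty B) [L.IsLocalization W] [W.HasLeftCalculusOfFractions] :
    L.PreservesZeroMorphisms where
  map_zero X Y := by
    obtain ⟨φ, hφ⟩ := Localization.exists_leftFraction L W (0 : L.obj X ⟶ L.obj Y)
    have hf : L.map φ.f = 0 := by
      rw [← φ.map_comp_map_s L (Localization.inverts L W), ← hφ, zero_comp]
    rw [← comp_zero (f := φ.f), L.map_comp, hf, zero_comp]

section InvertibleUpToSMul

variable {R : Type*} [CommRing R] (S : Submonoid R)
  {A : Type*} [Category A] [Preadditive A] [Linear R A]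

def MorphismProperty.invertibleUpToSMul : MorphismProperty A :=
  fun X Y s => ∃ a ∈ S, ∃ t : Y ⟶ X, s ≫ t = a • 𝟙 X ∧ t ≫ s = a • 𝟙 Y

namespace MorphismProperty

lemma smul_id_mem_invertibleUpToSMul {a : R} (ha : a ∈ S) (X : A) :
    invertibleUpToSMul S (a • 𝟙 X) :=
  ⟨a, ha, 𝟙 X, by simp, by simp⟩

instance : (invertibleUpToSMul S (A := A)).IsMultiplicative where
  id_mem X := by simpa using smul_id_mem_invertibleUpToSMul S S.one_mem X
  comp_mem := by
    rintro X Y Z s₁ s₂ ⟨a, ha, t₁, h₁, h₁'⟩ ⟨b, hb, t₂, h₂, h₂'⟩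
    refine ⟨a * b, S.mul_mem ha hb, t₂ ≫ t₁, ?_, ?_⟩
    · simp [reassoc_of% h₂, h₁, smul_smul, mul_comm]
    · simp [reassoc_of% h₁', h₂', smul_smul]

instance : (invertibleUpToSMul S (A := A)).HasLeftCalculusOfFractions where
  exists_leftFraction X Y φ := by
    obtain ⟨a, ha, t, hst, -⟩ := φ.hs
    exact ⟨⟨t ≫ φ.f, a • 𝟙 Y, smul_id_mem_invertibleUpToSMul S ha Y⟩, by simp [reassoc_of% hst]⟩
  ext X' X Y f₁ f₂ s := by
    rintro ⟨a, ha, t, -, hts⟩ h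
    refine ⟨Y, a • 𝟙 Y, smul_id_mem_invertibleUpToSMul S ha Y, ?_⟩
    simpa [reassoc_of% hts] using t ≫= h

end MorphismProperty

namespace Localization

variable {D : Type*} [Category D] (L : A ⥤ D)
  [L.IsLocalization (MorphismProperty.invertibleUpToSMul S)]

lemma map_eq_zero_iff_exists_smul_eq_zero [HasZeroMorphisms D] {X Y : A} (f : X ⟶ Y) :
    L.map f = 0 ↔ ∃ a ∈ S, a • f = 0 := by
  have := preservesZeroMorphisms_of_hasLeftCalculusOfFractions L
    (MorphismProperty.invertibleUpToSMul S)
  rw [← L.map_zero, MorphismProperty.map_eq_iff_postcomp L (MorphismProperty.invertibleUpToSMul S)]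
  constructor
  · rintro ⟨Z, s, ⟨a, ha, t, hst, -⟩, hfs⟩
    refine ⟨a, ha, ?_⟩
    calc a • f = f ≫ s ≫ t := by simp [hst]
      _ = 0 := by rw [reassoc_of% hfs, zero_comp]
  · rintro ⟨a, ha, hf⟩
    exact ⟨Y, a • 𝟙 Y, MorphismProperty.smul_id_mem_invertibleUpToSMul S ha Y, by simp [hf]⟩

lemma exists_comp_map_smul_id_eq_map {X Y : A} (α : L.obj X ⟶ L.obj Y) :
    ∃ (f : X ⟶ Y) (a : R), a ∈ S ∧ α ≫ L.map (a • 𝟙 Y) = L.map f := by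
  obtain ⟨φ, rfl⟩ := exists_leftFraction L (MorphismProperty.invertibleUpToSMul S) α
  obtain ⟨a, ha, t, hst, -⟩ := φ.hs
  refine ⟨φ.f ≫ t, a, ha, ?_⟩
  rw [← hst, L.map_comp, φ.map_comp_map_s_assoc, L.map_comp]

end Localization

end InvertibleUpToSMul

end CategoryTheory

namespace CategoryTheory.Pretriangulated

variable {C} {R : Type*} [CommRing R] [Linear R C] {T : Triangle C}

lemma smul_eq_zero_of_comp_mor₁_eq_zero [∀ n : ℤ, (shiftFunctor C n).Linear R]
    (hT : T ∈ distTriang C) {a : R} (ha : a • T.mor₃ = 0) {X : C} {u : X ⟶ T.obj₁}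
    (hu : u ≫ T.mor₁ = 0) : a • u = 0 := by
  -- `u⟦1⟧'` factors through `T.mor₃`, and the shift functor is faithful.
  obtain ⟨g, hg⟩ := Triangle.coyoneda_exact₁ _ hT (u⟦(1 : ℤ)⟧')
    (by rw [← Functor.map_comp, hu, Functor.map_zero])
  apply (shiftFunctor C (1 : ℤ)).map_injective
  rw [Functor.map_smul, hg, ← Linear.comp_smul, ha, comp_zero, Functor.map_zero]

lemma exists_comp_mor₁_eq_smul_id (hT : T ∈ distTriang C) {a : R} (ha : a • 𝟙 T.obj₃ = 0) :
    ∃ t : T.obj₂ ⟶ T.obj₁, t ≫ T.mor₁ = a • 𝟙 T.obj₂ := by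
  obtain ⟨t, ht⟩ := Triangle.coyoneda_exact₂ _ hT (a • 𝟙 T.obj₂) (by
    rw [Linear.smul_comp, Category.id_comp, ← Category.comp_id T.mor₂, ← Linear.comp_smul, ha,
      comp_zero])
  exact ⟨t, ht.symm⟩

lemma mul_self_smul_id_obj₃_eq_zero (hT : T ∈ distTriang C) {a : R} (h₂ : a • T.mor₂ = 0)
    (h₃ : a • T.mor₃ = 0) : (a * a) • 𝟙 T.obj₃ = 0 := by
  obtain ⟨w, hw⟩ := Triangle.coyoneda_exact₃ _ hT (a • 𝟙 T.obj₃) (by simpa using h₃)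
  rw [mul_smul, hw, ← Linear.comp_smul, h₂, comp_zero]

variable (S : Submonoid R)

lemma invertibleUpToSMul_mor₁_of_smul_id_obj₃_eq_zero [∀ n : ℤ, (shiftFunctor C n).Linear R]
    (hT : T ∈ distTriang C) {a : R} (ha : a ∈ S) (h : a • 𝟙 T.obj₃ = 0) :
    MorphismProperty.invertibleUpToSMul S T.mor₁ := by
  obtain ⟨t, ht⟩ := exists_comp_mor₁_eq_smul_id hT h
  have h₃ : a • T.mor₃ = 0 := by rw [← Category.id_comp T.mor₃, ← Linear.smul_comp, h, zero_comp]
  have hu : a • (T.mor₁ ≫ t - a • 𝟙 T.obj₁) = 0 :=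
    smul_eq_zero_of_comp_mor₁_eq_zero hT h₃ (by simp [ht])
  refine ⟨a * a, S.mul_mem ha ha, a • t, ?_, ?_⟩
  · rw [smul_sub, sub_eq_zero] at hu
    simpa [mul_smul] using hu
  · simp [ht, mul_smul]

lemma mul_self_smul_id_obj₃_eq_zero_of_comp_eq_smul_id [∀ n : ℤ, (shiftFunctor C n).Linear R]
    (hT : T ∈ distTriang C) {a : R} {t : T.obj₂ ⟶ T.obj₁} (h₁ : T.mor₁ ≫ t = a • 𝟙 T.obj₁)
    (h₂ : t ≫ T.mor₁ = a • 𝟙 T.obj₂) : (a * a) • 𝟙 T.obj₃ = 0 := by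
  refine mul_self_smul_id_obj₃_eq_zero hT ?_ ?_
  · rw [← Category.id_comp T.mor₂, ← Linear.smul_comp, ← h₂, Category.assoc,
      comp_distTriang_mor_zero₁₂ _ hT, comp_zero]
  · rw [← Category.comp_id T.mor₃, ← Linear.comp_smul, ← Functor.map_id, ← Functor.map_smul, ← h₁,
      Functor.map_comp, ← Category.assoc, comp_distTriang_mor_zero₃₁ _ hT, zero_comp]

end CategoryTheory.Pretriangulated

lemma coneW_eq_invertibleUpToSMul (R : Type*) [CommRing R] (p : Ideal R) [p.IsPrime]
    [Linear R C] [∀ n : ℤ, (shiftFunctor C n).Linear R] :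
    coneW C R p = MorphismProperty.invertibleUpToSMul p.primeCompl := by
  ext X Y f
  constructor
  · rintro ⟨Z, g, h, hT, a, ha, hZ⟩
    exact invertibleUpToSMul_mor₁_of_smul_id_obj₃_eq_zero _ hT ha hZ
  · rintro ⟨a, ha, t, h₁, h₂⟩
    obtain ⟨Z, g, h, hT⟩ := distinguished_cocone_triangle f
    exact ⟨Z, g, h, hT, a * a, p.primeCompl.mul_mem ha ha,
      mul_self_smul_id_obj₃_eq_zero_of_comp_eq_smul_id hT h₁ h₂⟩

/-- The canonical functor `Q : T → T/S_T(p)` to the Verdier quotient (modelled as a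
localization `L` of `C` at the morphisms whose cone lies in `S_T(p)`) induces, for all
`M, N`, an isomorphism `Hom_T(M,N)_p ≅ Hom_{T/S_T(p)}(M,N)`, `f/a ↦ Q(a • 𝟙 N)⁻¹ ∘ Q(f)`:
the kernel of `f ↦ L.map f` is exactly the `p`-torsion, and every morphism
`α : L M ⟶ L N` is of the form `Q(a • 𝟙 N)⁻¹ ∘ Q(f)`, i.e. `α ≫ L.map (a • 𝟙 N) = L.map f`. -/
theorem stmt7 (R : Type*) [CommRing R] [IsNoetherianRing R] (p : Ideal R) [p.IsPrime]
    [CategoryTheory.Linear R C] [∀ n : ℤ, (shiftFunctor C n).Linear R]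
    (D : Type*) [Category D] [Preadditive D] (L : C ⥤ D)
    [L.IsLocalization (coneW C R p)] (M N : C) :
    (∀ f : M ⟶ N, L.map f = 0 ↔ ∃ a ∈ p.primeCompl, a • f = 0) ∧
    (∀ α : L.obj M ⟶ L.obj N, ∃ (f : M ⟶ N) (a : R), a ∈ p.primeCompl ∧
        α ≫ L.map (a • 𝟙 N) = L.map f) := by
  have : L.IsLocalization (MorphismProperty.invertibleUpToSMul p.primeCompl) :=
    coneW_eq_invertibleUpToSMul C R p ▸ inferInstance
  exact ⟨Localization.map_eq_zero_iff_exists_smul_eq_zero _ L,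
    Localization.exists_comp_map_smul_id_eq_map _ L⟩
end

section
/- Let F : T → T' be a fully faithful exact functor of triangulated categories such that every object of T' is a direct summand of F(M) for some M ∈ T (a triangle equivalence up to direct summands). Then for every object M' of T', the object M' ⊕ M'[1] is isomorphic to F(M) for some M ∈ T. -/
open CategoryTheory Limits Pretriangulated

universe v u

variable (C : Type u) [Category.{v} C] [Preadditive C] [HasZeroObject C]
  [HasShift C ℤ] [∀ n : ℤ, (shiftFunctor C n).Additive] [Pretriangulated C]

/-! Split monomorphisms in a pretriangulated category have complements, so `F(M) ≅ M' ⊞ K`.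
By fullness, the endomorphism `0 ⊞ 𝟙` of `M' ⊞ K` is `F(φ)` for some `φ : M ⟶ M`, and since `F` is
exact, `F(cone φ)` is a cone of `0 ⊞ 𝟙`. A cone of a biproduct of morphisms is the biproduct of
their cones (distinguished triangles are closed under products), and here these are `M' ⊞ M'⟦1⟧`
for `0 : M' ⟶ M'` and `0` for `𝟙 K`. -/

namespace CategoryTheory.Limits

variable {D : Type*} [Category D] [HasZeroMorphisms D] [HasBinaryBiproducts D]
  [HasProductsOfShape WalkingPair D]

@[simps]
noncomputable def piWalkingPairIsoBiprod (f : WalkingPair → D) : ∏ᶜ f ≅ f .left ⊞ f .right where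
  hom := biprod.lift (Pi.π f .left) (Pi.π f .right)
  inv := Pi.lift fun | .left => biprod.fst | .right => biprod.snd
  hom_inv_id := by ext ⟨_ | _⟩ <;> simp
  inv_hom_id := by ext <;> simp

lemma Pi.map_comp_piWalkingPairIsoBiprod_hom {f g : WalkingPair → D} (p : ∀ j, f j ⟶ g j) :
    Pi.map p ≫ (piWalkingPairIsoBiprod g).hom =
      (piWalkingPairIsoBiprod f).hom ≫ biprod.map (p .left) (p .right) := by
  ext <;> simp

end CategoryTheory.Limits

section

variable {C}

lemma nonempty_iso_biprod_shift_of_mor₁_eq_zero (T : Triangle C) (hT : T ∈ distTriang C)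
    (h : T.mor₁ = 0) : Nonempty (T.obj₃ ≅ T.obj₂ ⊞ T.obj₁⟦(1 : ℤ)⟧) := by
  obtain ⟨e, -, -⟩ := exists_iso_binaryBiproduct_of_distTriang _ (rot_of_distTriang _ hT)
    (show -T.mor₁⟦(1 : ℤ)⟧' = 0 by simp [h])
  exact ⟨e⟩

lemma exists_iso_biprod_of_isSplitMono {A X : C} (i : A ⟶ X) [IsSplitMono i] :
    ∃ K : C, Nonempty (X ≅ A ⊞ K) := by
  obtain ⟨K, g, δ, hT⟩ := distinguished_cocone_triangle i
  obtain ⟨e, -, -⟩ := exists_iso_binaryBiproduct_of_distTriang _ hT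
    (Triangle.mor₃_eq_zero_of_mono₁ _ hT (inferInstanceAs (Mono i)))
  exact ⟨K, ⟨e⟩⟩

lemma nonempty_iso_biprod_of_arrow_iso_biprod_map (T T₁ T₂ : Triangle C) (hT : T ∈ distTriang C)
    (h₁ : T₁ ∈ distTriang C) (h₂ : T₂ ∈ distTriang C)
    (e : Arrow.mk T.mor₁ ≅ Arrow.mk (biprod.map T₁.mor₁ T₂.mor₁)) :
    Nonempty (T.obj₃ ≅ T₁.obj₃ ⊞ T₂.obj₃) := by
  let P := productTriangle (pairFunction T₁ T₂)
  have hP : P ∈ distTriang C := productTriangle_distinguished _ (by rintro (_ | _) <;> assumption)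
  have eP : Arrow.mk P.mor₁ ≅ Arrow.mk (biprod.map T₁.mor₁ T₂.mor₁) :=
    Arrow.isoMk (piWalkingPairIsoBiprod _) (piWalkingPairIsoBiprod _)
      (Pi.map_comp_piWalkingPairIsoBiprod_hom fun j => (pairFunction T₁ T₂ j).mor₁).symm
  obtain ⟨E, -, -⟩ := exists_iso_of_arrow_iso _ _ hT hP (e ≪≫ eP.symm)
  exact ⟨Triangle.π₃.mapIso E ≪≫ piWalkingPairIsoBiprod _⟩

lemma nonempty_iso_biprod_shift_of_arrow_iso_biprod_map_zero_id {A K : C} (T : Triangle C)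
    (hT : T ∈ distTriang C) (e : Arrow.mk T.mor₁ ≅ Arrow.mk (biprod.map (0 : A ⟶ A) (𝟙 K))) :
    Nonempty (T.obj₃ ≅ A ⊞ A⟦(1 : ℤ)⟧) := by
  obtain ⟨Z, g, δ, hZ⟩ := distinguished_cocone_triangle (0 : A ⟶ A)
  obtain ⟨eT⟩ := nonempty_iso_biprod_of_arrow_iso_biprod_map T (Triangle.mk 0 g δ)
    (contractibleTriangle K) hT hZ (contractible_distinguished K) e
  obtain ⟨eZ⟩ := nonempty_iso_biprod_shift_of_mor₁_eq_zero _ hZ rfl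
  exact ⟨eT ≪≫ (isoBiprodZero (isZero_zero C)).symm ≪≫ eZ⟩

end

/-- Balmer's cofinality lemma: let `F : T → T'` be a fully faithful exact functor such
that every object of `T'` is a direct summand of `F(M)` for some `M ∈ T` (a triangle
equivalence up to direct summands). Then for every `M' ∈ T'`, the object `M' ⊕ M'[1]` is
isomorphic to `F(M)` for some `M ∈ T`. -/
theorem stmt10 (D : Type*) [Category D] [Preadditive D] [HasZeroObject D]
    [HasShift D ℤ] [∀ n : ℤ, (shiftFunctor D n).Additive] [Pretriangulated D]
    [HasBinaryBiproducts D]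
    (F : C ⥤ D) [F.CommShift ℤ] [F.IsTriangulated] [F.Additive] [F.Full] [F.Faithful]
    (hsummand : ∀ M' : D, ∃ (M : C) (i : M' ⟶ F.obj M) (r : F.obj M ⟶ M'), i ≫ r = 𝟙 M')
    (M' : D) :
    ∃ M : C, Nonempty ((M' ⊞ M'⟦(1 : ℤ)⟧) ≅ F.obj M) := by
  obtain ⟨M, i, r, hir⟩ := hsummand M'
  have : IsSplitMono i := .mk' ⟨r, hir⟩
  obtain ⟨K, ⟨e⟩⟩ := exists_iso_biprod_of_isSplitMono i
  obtain ⟨φ, hφ⟩ := F.map_surjective (e.hom ≫ biprod.map 0 (𝟙 K) ≫ e.inv)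
  obtain ⟨N, g, δ, hN⟩ := distinguished_cocone_triangle φ
  obtain ⟨eN⟩ := nonempty_iso_biprod_shift_of_arrow_iso_biprod_map_zero_id _
    (F.map_distinguished _ hN)
    (Arrow.isoMk e e (show e.hom ≫ biprod.map 0 (𝟙 K) = F.map φ ≫ e.hom by simp [hφ]))
  exact ⟨N, ⟨eN.symm⟩⟩
end

section
/- Let F : T → T' be a triangle equivalence up to direct summands. Then Y ↦ F^{-1}(Y) is a lattice isomorphism from thick subcategories of T' to thick subcategories of T, it preserves and reflects primeness of thick subcategories, and the induced map Spec△(T') → Spec△(T), P ↦ F^{-1}(P), is a homeomorphism. -/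
open CategoryTheory Limits Pretriangulated

universe v u

variable (C : Type u) [Category.{v} C] [Preadditive C] [HasZeroObject C]
  [HasShift C ℤ] [∀ n : ℤ, (shiftFunctor C n).Additive] [Pretriangulated C]

/-!
Pulling back along `F` clearly preserves thickness. Conversely, for `X` thick in `C`, the objects
of `D` that are retracts of some `F M` with `M ∈ X` form a thick subcategory. The key point: if
`M'` is a retract of `F M` via `i`, `r`, then `r ≫ i` lifts to an endomorphism of `M` by fullness,
and the cone of `𝟙 - r ≫ i` is `M' ⊞ M'⟦1⟧`; hence `M' ⊞ M'⟦1⟧ ≅ F N` with `N` in the thick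
closure of `M`. Applied to the sum of a distinguished triangle and its shift, this gives closure
under extensions; and since `M'` and `M' ⊞ M'⟦1⟧` lie in the same thick subcategories, the two
constructions are mutually inverse, giving an order isomorphism. Primality is order-theoretic, so
it is transported, and `F⁻¹` matches the basic closed sets: `suppObj (F M)` with `suppObj M`, and
`suppObj M'` with `suppObj N`.
-/

open ZeroObject

section ConeOfIdempotent

variable {D : Type*} [Category D] [Preadditive D] [HasZeroObject D]
  [HasShift D ℤ] [∀ n : ℤ, (shiftFunctor D n).Additive] [Pretriangulated D]

lemma CategoryTheory.Retract.nonempty_iso_biprod_shift_of_distTriang {X M Z : D} (h : Retract M X)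
    (g : X ⟶ Z) (δ : Z ⟶ X⟦(1 : ℤ)⟧) (hT : Triangle.mk (𝟙 X - h.r ≫ h.i) g δ ∈ distTriang D) :
    Nonempty (Z ≅ M ⊞ M⟦(1 : ℤ)⟧) := by
  have hg : h.r ≫ h.i ≫ g = g := by
    have h₁₂ : (𝟙 X - h.r ≫ h.i) ≫ g = 0 := comp_distTriang_mor_zero₁₂ _ hT
    rwa [Preadditive.sub_comp, sub_eq_zero, Category.id_comp, Category.assoc, eq_comm] at h₁₂
  have hδ : δ ≫ h.r⟦(1 : ℤ)⟧' ≫ h.i⟦(1 : ℤ)⟧' = δ := by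
    have h₃₁ : δ ≫ (𝟙 X - h.r ≫ h.i)⟦(1 : ℤ)⟧' = 0 := comp_distTriang_mor_zero₃₁ _ hT
    rwa [Functor.map_sub, Preadditive.comp_sub, sub_eq_zero, CategoryTheory.Functor.map_id,
      Category.comp_id, Functor.map_comp, eq_comm] at h₃₁
  have hgδ : g ≫ δ = 0 := comp_distTriang_mor_zero₂₃ _ hT
  obtain ⟨π, hπ⟩ : ∃ π : Z ⟶ M, g ≫ π = h.r := by
    have : (𝟙 X - h.r ≫ h.i) ≫ h.r = 0 := by simp [Preadditive.sub_comp]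
    obtain ⟨π, hπ⟩ := Triangle.yoneda_exact₂ _ hT h.r this
    exact ⟨π, hπ.symm⟩
  obtain ⟨s, hs⟩ : ∃ s : M⟦(1 : ℤ)⟧ ⟶ Z, s ≫ δ = h.i⟦(1 : ℤ)⟧' := by
    have : h.i⟦(1 : ℤ)⟧' ≫ (𝟙 X - h.r ≫ h.i)⟦(1 : ℤ)⟧' = 0 := by
      simp [← Functor.map_comp, Preadditive.comp_sub]
    obtain ⟨s, hs⟩ := Triangle.coyoneda_exact₁ _ hT (h.i⟦(1 : ℤ)⟧') this
    exact ⟨s, hs.symm⟩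
  -- correcting `s` makes `φ` an exact section of `ψ`
  let s' := s - (s ≫ π) ≫ h.i ≫ g
  let ψ : Z ⟶ M ⊞ M⟦(1 : ℤ)⟧ := biprod.lift π (δ ≫ h.r⟦(1 : ℤ)⟧')
  let φ : M ⊞ M⟦(1 : ℤ)⟧ ⟶ Z := biprod.desc (h.i ≫ g) s'
  have hφψ : φ ≫ ψ = 𝟙 _ := by
    ext <;> simp [φ, ψ, s', hπ, reassoc_of% hgδ, reassoc_of% hs, Preadditive.sub_comp,
      ← Functor.map_comp]
  let θ : Triangle.mk (𝟙 X - h.r ≫ h.i) g δ ⟶ Triangle.mk (𝟙 X - h.r ≫ h.i) g δ :=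
    Triangle.homMk _ _ (𝟙 X) (𝟙 X) (ψ ≫ φ)
      (by change (𝟙 X - h.r ≫ h.i) ≫ 𝟙 X = 𝟙 X ≫ (𝟙 X - h.r ≫ h.i); simp)
      (by
        change g ≫ ψ ≫ φ = 𝟙 X ≫ g
        simp [φ, ψ, s', reassoc_of% hgδ, reassoc_of% hπ, Preadditive.comp_sub, hg])
      (by
        change δ ≫ (𝟙 X)⟦(1 : ℤ)⟧' = (ψ ≫ φ) ≫ δ
        simp [φ, ψ, s', hgδ, hs, hδ])
  have : IsIso (ψ ≫ φ) := isIso₃_of_isIso₁₂ θ hT hT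
      (inferInstanceAs (IsIso (𝟙 X))) (inferInstanceAs (IsIso (𝟙 X)))
  have hψφ : ψ ≫ φ = 𝟙 Z := by
    rw [← cancel_epi (ψ ≫ φ), Category.comp_id, Category.assoc, reassoc_of% hφψ]
  exact ⟨⟨ψ, φ, hψφ, hφψ⟩⟩

end ConeOfIdempotent

section EssentialImage

variable {C}
variable {D : Type*} [Category D] [Preadditive D] [HasZeroObject D]
  [HasShift D ℤ] [∀ n : ℤ, (shiftFunctor D n).Additive] [Pretriangulated D]

def CategoryTheory.Functor.IsDenseUpToRetracts (F : C ⥤ D) : Prop :=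
  ∀ M' : D, ∃ (M : C) (i : M' ⟶ F.obj M) (r : F.obj M ⟶ M'), i ≫ r = 𝟙 M'

variable (F : C ⥤ D) [F.CommShift ℤ] [F.IsTriangulated] [F.Full]

lemma CategoryTheory.Functor.exists_distTriang_iso_obj₃ (T : Triangle D) (hT : T ∈ distTriang D)
    {X₁ X₂ : C} (e₁ : T.obj₁ ≅ F.obj X₁) (e₂ : T.obj₂ ≅ F.obj X₂) :
    ∃ (X₃ : C) (f : X₁ ⟶ X₂) (g : X₂ ⟶ X₃) (h : X₃ ⟶ X₁⟦(1 : ℤ)⟧),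
      Triangle.mk f g h ∈ distTriang C ∧ Nonempty (T.obj₃ ≅ F.obj X₃) := by
  obtain ⟨X₃, g, h, hT'⟩ :=
    distinguished_cocone_triangle (F.preimage (e₁.inv ≫ T.mor₁ ≫ e₂.hom))
  exact ⟨X₃, _, g, h, hT', ⟨Triangle.π₃.mapIso
    (isoTriangleOfIso₁₂ _ _ hT (F.map_distinguished _ hT') e₁ e₂ (by
      change T.mor₁ ≫ e₂.hom = e₁.hom ≫ F.map (F.preimage (e₁.inv ≫ T.mor₁ ≫ e₂.hom))
      simp))⟩⟩

lemma CategoryTheory.Functor.exists_distTriang_map_obj_iso_biprod_shift {M : C} {M' : D}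
    (h : Retract M' (F.obj M)) :
    ∃ (N : C) (f : M ⟶ M) (g : M ⟶ N) (δ : N ⟶ M⟦(1 : ℤ)⟧),
      Triangle.mk f g δ ∈ distTriang C ∧ Nonempty (F.obj N ≅ M' ⊞ M'⟦(1 : ℤ)⟧) := by
  obtain ⟨Z, g, δ, hT⟩ := distinguished_cocone_triangle (𝟙 (F.obj M) - h.r ≫ h.i)
  obtain ⟨e⟩ := h.nonempty_iso_biprod_shift_of_distTriang g δ hT
  obtain ⟨N, f, g', δ', hN, ⟨e'⟩⟩ :=
    F.exists_distTriang_iso_obj₃ _ hT (Iso.refl (F.obj M)) (Iso.refl (F.obj M))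
  exact ⟨N, f, g', δ', hN, ⟨e'.symm ≪≫ e⟩⟩

end EssentialImage

section Biproducts

variable {E : Type*} [Category* E] [HasZeroMorphisms E] [HasBinaryBiproducts E]

noncomputable def biprodIsoPiBool [HasFiniteProducts E] (f : Bool → E) :
    f true ⊞ f false ≅ ∏ᶜ f where
  hom := Pi.lift fun b => Bool.rec biprod.snd biprod.fst b
  inv := biprod.lift (Pi.π f true) (Pi.π f false)
  hom_inv_id := by apply biprod.hom_ext <;> simp
  inv_hom_id := by apply limit.hom_ext; rintro ⟨_ | _⟩ <;> simp

noncomputable def retractBiprod (X Y : E) : Retract X (X ⊞ Y) where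
  i := biprod.inl
  r := biprod.fst

end Biproducts

namespace ThickSubcat

variable {C}

lemma mem_of_retract (S : ThickSubcat C) {X Y : C} (h : Retract Y X) (hX : X ∈ S.set) :
    Y ∈ S.set :=
  S.summand_mem X Y h.i h.r h.retract hX

lemma mem_iff_of_iso (S : ThickSubcat C) {X Y : C} (e : X ≅ Y) : X ∈ S.set ↔ Y ∈ S.set :=
  ⟨S.mem_of_iso e, S.mem_of_iso e.symm⟩

lemma cone_mem (S : ThickSubcat C) (T : Triangle C) (hT : T ∈ distTriang C)
    (h₁ : T.obj₁ ∈ S.set) (h₂ : T.obj₂ ∈ S.set) : T.obj₃ ∈ S.set :=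
  S.ext_mem T.rotate (rot_of_distTriang T hT) h₂ (S.shift_mem _ 1 h₁)

lemma biprod_shift_mem_iff (S : ThickSubcat C) (X : C) :
    (X ⊞ X⟦(1 : ℤ)⟧) ∈ S.set ↔ X ∈ S.set :=
  ⟨S.mem_of_retract (retractBiprod X _), fun h =>
    S.ext_mem _ (binaryBiproductTriangle_distinguished X (X⟦(1 : ℤ)⟧)) h (S.shift_mem X 1 h)⟩

variable {D : Type*} [Category D] [Preadditive D] [HasZeroObject D]
  [HasShift D ℤ] [∀ n : ℤ, (shiftFunctor D n).Additive] [Pretriangulated D]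
  (F : C ⥤ D) [F.CommShift ℤ] [F.IsTriangulated]

def comap (Y : ThickSubcat D) : ThickSubcat C where
  set := F.obj ⁻¹' Y.set
  mem_of_iso e hX := Y.mem_of_iso (F.mapIso e) hX
  zero_mem _ hZ := Y.zero_mem _ (F.map_isZero hZ)
  shift_mem X n hX := Y.mem_of_iso ((F.commShiftIso n).app X).symm (Y.shift_mem _ n hX)
  ext_mem T hT h₁ h₃ := Y.ext_mem _ (F.map_distinguished T hT) h₁ h₃
  summand_mem _ _ i r hir hX := Y.mem_of_retract (Retract.map ⟨i, r, hir⟩ F) hX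

variable [F.Full]

lemma exists_mem_retract_obj₂ (X : ThickSubcat C) (T : Triangle D) (hT : T ∈ distTriang D)
    {M₁ M₃ : C} (h₁ : M₁ ∈ X.set) (h₃ : M₃ ∈ X.set)
    (r₁ : Retract T.obj₁ (F.obj M₁)) (r₃ : Retract T.obj₃ (F.obj M₃)) :
    ∃ M₂ ∈ X.set, Nonempty (Retract T.obj₂ (F.obj M₂)) := by
  obtain ⟨N₁, _, _, _, hN₁, ⟨e₁⟩⟩ := F.exists_distTriang_map_obj_iso_biprod_shift r₁
  obtain ⟨N₃, _, _, _, hN₃, ⟨e₃⟩⟩ := F.exists_distTriang_map_obj_iso_biprod_shift r₃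
  -- the sum `T ⊕ T⟦1⟧`, whose outer vertices are `F.obj N₁` and `F.obj N₃` up to isomorphism
  let K : Bool → Triangle D := fun b => Bool.rec (T⟦(1 : ℤ)⟧) T b
  have hK : productTriangle K ∈ distTriang D :=
    productTriangle_distinguished K fun b => b.rec (T.shift_distinguished hT 1) hT
  let S := productTriangle K
  let e₁' : S.obj₁ ≅ F.obj N₁ := (biprodIsoPiBool _).symm ≪≫ e₁.symm
  let e₃' : S.obj₃⟦(-1 : ℤ)⟧ ≅ F.obj (N₃⟦(-1 : ℤ)⟧) :=
    (shiftFunctor D (-1 : ℤ)).mapIso ((biprodIsoPiBool _).symm ≪≫ e₃.symm) ≪≫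
      ((F.commShiftIso (-1 : ℤ)).app N₃).symm
  obtain ⟨Z, _, _, _, hZ, ⟨e⟩⟩ :=
    F.exists_distTriang_iso_obj₃ _ (inv_rot_of_distTriang _ hK) e₃' e₁'
  refine ⟨Z, X.cone_mem _ hZ (X.shift_mem _ _ (X.cone_mem _ hN₃ h₃ h₃)) (X.cone_mem _ hN₁ h₁ h₁),
    ⟨(retractBiprod _ _).trans ((Retract.ofIso (biprodIsoPiBool _)).trans (Retract.ofIso e))⟩⟩

def map (X : ThickSubcat C) : ThickSubcat D where
  set := {M' | ∃ M ∈ X.set, Nonempty (Retract M' (F.obj M))}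
  mem_of_iso := by
    rintro A B e ⟨M, hM, ⟨h⟩⟩
    exact ⟨M, hM, ⟨(Retract.ofIso e.symm).trans h⟩⟩
  zero_mem Z hZ := ⟨0, X.zero_mem 0 (isZero_zero C), ⟨⟨0, 0, hZ.eq_of_src _ _⟩⟩⟩
  shift_mem := by
    rintro A n ⟨M, hM, ⟨h⟩⟩
    exact ⟨M⟦n⟧, X.shift_mem M n hM,
      ⟨(h.map (shiftFunctor D n)).trans (Retract.ofIso ((F.commShiftIso n).app M).symm)⟩⟩
  ext_mem := by
    rintro T hT ⟨M₁, h₁, ⟨r₁⟩⟩ ⟨M₃, h₃, ⟨r₃⟩⟩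
    exact exists_mem_retract_obj₂ F X T hT h₁ h₃ r₁ r₃
  summand_mem := by
    rintro A B i r hir ⟨M, hM, ⟨h⟩⟩
    exact ⟨M, hM, ⟨(⟨i, r, hir⟩ : Retract B A).trans h⟩⟩

lemma map_mono {X₁ X₂ : ThickSubcat C} (h : X₁ ≤ X₂) : map F X₁ ≤ map F X₂ :=
  fun _ ⟨M, hM, hr⟩ => ⟨M, h hM, hr⟩

lemma comap_map [F.Faithful] (X : ThickSubcat C) : comap F (map F X) = X := by
  refine ThickSubcat.set_injective C (Set.ext fun M => ⟨?_, fun hM => ⟨M, hM, ⟨Retract.refl _⟩⟩⟩)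
  rintro ⟨N, hN, ⟨h⟩⟩
  exact X.mem_of_retract ⟨F.preimage h.i, F.preimage h.r, F.map_injective (by simp)⟩ hN

lemma exists_obj_forall_mem_iff (hF : F.IsDenseUpToRetracts) (M' : D) :
    ∃ N : C, ∀ Y : ThickSubcat D, M' ∈ Y.set ↔ F.obj N ∈ Y.set := by
  obtain ⟨M, i, r, hir⟩ := hF M'
  obtain ⟨N, -, -, -, -, ⟨e⟩⟩ := F.exists_distTriang_map_obj_iso_biprod_shift ⟨i, r, hir⟩
  exact ⟨N, fun Y => (Y.biprod_shift_mem_iff M').symm.trans (Y.mem_iff_of_iso e.symm)⟩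

lemma map_comap (hF : F.IsDenseUpToRetracts) (Y : ThickSubcat D) :
    map F (comap F Y) = Y := by
  refine ThickSubcat.set_injective D (Set.ext fun M' => ⟨?_, fun hM' => ?_⟩)
  · rintro ⟨N, hN, ⟨h⟩⟩
    exact Y.mem_of_retract h hN
  · obtain ⟨N, hN⟩ := exists_obj_forall_mem_iff F hF M'
    exact (hN _).2 ⟨N, (hN Y).1 hM', ⟨Retract.refl _⟩⟩

noncomputable def comapOrderIso [F.Faithful] (hF : F.IsDenseUpToRetracts) :
    ThickSubcat D ≃o ThickSubcat C :=
  Equiv.toOrderIso ⟨comap F, map F, map_comap F hF, comap_map F⟩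
    (fun _ _ h _ hX => h hX) (fun _ _ => map_mono F)

end ThickSubcat

lemma OrderIso.minimal_lt_apply_iff {α β : Type*} [Preorder α] [Preorder β] (e : α ≃o β)
    (a x : α) : Minimal (e a < ·) (e x) ↔ Minimal (a < ·) x := by
  simp only [Minimal, e.surjective.forall, e.lt_iff_lt, e.le_iff_le]

section Spectrum

variable {C}
variable {D : Type*} [Category D] [Preadditive D] [HasZeroObject D]
  [HasShift D ℤ] [∀ n : ℤ, (shiftFunctor D n).Additive] [Pretriangulated D]

lemma isPrimeThick_iff_of_orderIso (e : ThickSubcat D ≃o ThickSubcat C) (Y : ThickSubcat D) :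
    IsPrimeThick D Y ↔ IsPrimeThick C (e Y) :=
  e.toEquiv.existsUnique_congr fun X => (e.minimal_lt_apply_iff Y X).symm

def SpecTri.equivOfOrderIso (e : ThickSubcat D ≃o ThickSubcat C) : SpecTri D ≃ SpecTri C :=
  e.toEquiv.subtypeEquiv (isPrimeThick_iff_of_orderIso e)

lemma SpecTri.continuous_of_forall_exists_mem_iff {f : SpecTri D → SpecTri C}
    (h : ∀ M : C, ∃ M' : D, ∀ P, M ∈ (f P).1.set ↔ M' ∈ P.1.set) : Continuous f := by
  refine continuous_generateFrom_iff.2 ?_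
  rintro _ ⟨M, rfl⟩
  obtain ⟨M', hM'⟩ := h M
  have : f ⁻¹' (suppObj C M)ᶜ = (suppObj D M')ᶜ := by
    ext P
    simp [suppObj, hM']
  exact this ▸ TopologicalSpace.isOpen_generateFrom_of_mem ⟨M', rfl⟩

end Spectrum

/-- Let `F : T → T'` be a triangle equivalence up to direct summands. Then
`Y ↦ F⁻¹(Y)` is a lattice isomorphism from thick subcategories of `T'` to those of `T`,
it preserves and reflects primeness, and the induced map
`Spec△(T') → Spec△(T)`, `P ↦ F⁻¹(P)`, is a homeomorphism. -/
theorem stmt11 (D : Type*) [Category D] [Preadditive D] [HasZeroObject D]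
    [HasShift D ℤ] [∀ n : ℤ, (shiftFunctor D n).Additive] [Pretriangulated D]
    (F : C ⥤ D) [F.CommShift ℤ] [F.IsTriangulated] [F.Additive] [F.Full] [F.Faithful]
    (hsummand : ∀ M' : D, ∃ (M : C) (i : M' ⟶ F.obj M) (r : F.obj M ⟶ M'), i ≫ r = 𝟙 M') :
    ∃ e : ThickSubcat D ≃o ThickSubcat C,
      (∀ Y : ThickSubcat D, (e Y).set = F.obj ⁻¹' Y.set) ∧
      (∀ Y : ThickSubcat D, IsPrimeThick D Y ↔ IsPrimeThick C (e Y)) ∧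
      ∃ h : SpecTri D ≃ₜ SpecTri C,
        ∀ P : SpecTri D, ((h P).1 : ThickSubcat C).set = F.obj ⁻¹' P.1.set := by
  let e := ThickSubcat.comapOrderIso F hsummand
  have hcont : Continuous (SpecTri.equivOfOrderIso e) :=
    SpecTri.continuous_of_forall_exists_mem_iff fun M => ⟨F.obj M, fun _ => Iff.rfl⟩
  have hcont_symm : Continuous (SpecTri.equivOfOrderIso e).symm := by
    refine SpecTri.continuous_of_forall_exists_mem_iff fun M' => ?_
    obtain ⟨N, hN⟩ := ThickSubcat.exists_obj_forall_mem_iff F hsummand M'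
    refine ⟨N, fun Q => (hN _).trans ?_⟩
    change N ∈ (e (e.symm Q.1)).set ↔ N ∈ Q.1.set
    rw [e.apply_symm_apply]
  exact ⟨e, fun _ => rfl, isPrimeThick_iff_of_orderIso e,
    ⟨⟨SpecTri.equivOfOrderIso e, hcont, hcont_symm⟩, fun _ => rfl⟩⟩
end

section
/- Let T be an essentially small triangulated category and (X, σ) a classifying support data for T. Then the map φ : X → Spec△(T), x ↦ σ^{-1}({x' ∈ X | x ∉ closure({x'})}), is a well-defined homeomorphism; moreover φ(x) = {M ∈ T | x ∉ σ(M)} and φ^{-1}(Supp△(M)) = σ(M) for all M ∈ T. -/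
open CategoryTheory Limits Pretriangulated

universe v u

variable (C : Type u) [Category.{v} C] [Preadditive C] [HasZeroObject C]
  [HasShift C ℤ] [∀ n : ℤ, (shiftFunctor C n).Additive] [Pretriangulated C]

/-! Under the classification, thick subcategories and specialization-closed subsets of `X`
are order isomorphic, so prime thick subcategories correspond to specialization-closed sets
with a unique cover. For a point `x`, the set `{y | ¬y ⤳ x}` has the least strict upper bound
`insert x {y | ¬y ⤳ x}`. Conversely, noetherianity provides, below any point outside a
specialization-closed `W`, a point `x` closed in `Wᶜ`, and `insert x W` covers `W`; if the cover
is unique, all these points coincide, which forces `W = {y | ¬y ⤳ x}`.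
The preimage of `suppObj M` is `σ M`, and every irreducible closed set is some `σ M` (its generic
point lies in some `σ M` contained in it), so every closed set is a finite union of the `σ M`
and `φ` is a homeomorphism. -/

theorem OrderIso.minimal_apply_lt_apply_iff {α β : Type*} [Preorder α] [Preorder β]
    (e : α ≃o β) {a b : α} : Minimal (e a < ·) (e b) ↔ Minimal (a < ·) b := by
  simp only [Minimal, e.lt_iff_lt, e.surjective.forall, e.le_iff_le]

theorem OrderIso.existsUnique_minimal_lt_iff {α β : Type*} [Preorder α] [Preorder β]
    (e : α ≃o β) (a : α) : (∃! b, Minimal (e a < ·) b) ↔ ∃! b, Minimal (a < ·) b :=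
  (e.toEquiv.existsUnique_congr fun _ => e.minimal_apply_lt_apply_iff.symm).symm

theorem existsUnique_minimal_lt_of_isLeast {α : Type*} [PartialOrder α] {a m : α}
    (h : IsLeast {b | a < b} m) : ∃! b, Minimal (a < ·) b :=
  ⟨m, h.minimal, fun _ hb => h.minimal_iff.mp hb⟩

open Topology

section Specialization

variable {X : Type*} [TopologicalSpace X]

theorem stableUnderSpecialization_setOf_not_specializes (x : X) :
    StableUnderSpecialization {y | ¬y ⤳ x} :=
  fun _ _ hyz hy hzx => hy (hyz.trans hzx)

theorem IsClosed.subset_setOf_not_specializes_iff {F : Set X} (hF : IsClosed F) (x : X) :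
    F ⊆ {y | ¬y ⤳ x} ↔ x ∉ F :=
  ⟨fun h hx => h hx specializes_rfl, fun hx _ hy hyx => hx (hyx.mem_closed hF hy)⟩

theorem exists_specializes_forall_specializes_eq [TopologicalSpace.NoetherianSpace X] [T0Space X]
    {A : Set X} {z : X} (hz : z ∈ A) : ∃ x ∈ A, z ⤳ x ∧ ∀ y ∈ A, x ⤳ y → y = x := by
  obtain ⟨⟨x, hxA, hzx⟩, -, hx⟩ :=
    (isClosed_univ (X := ↥(A ∩ closure {z}))).exists_closed_singleton
      ⟨⟨z, hz, subset_closure rfl⟩, trivial⟩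
  refine ⟨x, hxA, specializes_iff_mem_closure.mpr hzx, fun y hyA hxy => ?_⟩
  have hzy : z ⤳ y := (specializes_iff_mem_closure.mpr hzx).trans hxy
  have : (⟨y, hyA, specializes_iff_mem_closure.mp hzy⟩ : ↥(A ∩ closure {z})) ∈
      ({⟨x, hxA, hzx⟩} : Set ↥(A ∩ closure {z})) :=
    (subtype_specializes_iff _ _ |>.mpr hxy).mem_closed hx rfl
  exact congrArg Subtype.val this

abbrev SpecializationStableSet (X : Type*) [TopologicalSpace X] :=
  {W : Set X // StableUnderSpecialization W}

theorem StableUnderSpecialization.insert {W : Set X} (hW : StableUnderSpecialization W) {x : X}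
    (hx : ∀ y ∉ W, x ⤳ y → y = x) : StableUnderSpecialization (insert x W) := by
  rintro a b hab (rfl | ha)
  · by_cases hb : b ∈ W
    · exact .inr hb
    · exact .inl (hx b hb hab)
  · exact .inr (hW hab ha)

theorem minimal_lt_insert {W : SpecializationStableSet X} {x : X} (hxW : x ∉ W.1)
    (hx : ∀ y ∉ W.1, x ⤳ y → y = x) :
    Minimal (W < ·) ⟨insert x W.1, W.2.insert hx⟩ := by
  refine ⟨Set.ssubset_insert hxW, fun V hWV hV => ?_⟩
  obtain ⟨v, hvV, hvW⟩ := Set.exists_of_ssubset hWV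
  obtain rfl : v = x := (hV hvV).resolve_right hvW
  exact Set.insert_subset hvV hWV.le

theorem existsUnique_minimal_lt_setOf_not_specializes [T0Space X] (x : X) :
    ∃! V, Minimal ((⟨{y | ¬y ⤳ x}, stableUnderSpecialization_setOf_not_specializes x⟩ :
      SpecializationStableSet X) < ·) V := by
  have hx : ∀ y ∉ {y | ¬y ⤳ x}, x ⤳ y → y = x := fun _ hyx hxy =>
    ((not_not.mp hyx).antisymm hxy).eq
  refine existsUnique_minimal_lt_of_isLeast
    ⟨(minimal_lt_insert (not_not.mpr specializes_rfl) hx).prop, fun V hV => ?_⟩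
  obtain ⟨v, hvV, hvx⟩ := Set.exists_of_ssubset hV
  exact Set.insert_subset (V.2 (not_not.mp hvx) hvV) hV.le

theorem exists_eq_setOf_not_specializes [TopologicalSpace.NoetherianSpace X] [T0Space X]
    {W : SpecializationStableSet X} (h : ∃! V, Minimal (W < ·) V) :
    ∃ x, W.1 = {y | ¬y ⤳ x} := by
  obtain ⟨U, hU, huniq⟩ := h
  have hcover : ∀ x ∉ W.1, ∀ hx : ∀ y ∉ W.1, x ⤳ y → y = x, insert x W.1 = U.1 :=
    fun _ hxW hx => congrArg Subtype.val (huniq _ (minimal_lt_insert hxW hx))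
  obtain ⟨z, -, hzW⟩ := Set.exists_of_ssubset hU.prop
  obtain ⟨x, hxW, -, hx⟩ := exists_specializes_forall_specializes_eq (A := W.1ᶜ) hzW
  refine ⟨x, Set.ext fun y => ⟨fun hy hyx => hxW (W.2 hyx hy), fun hyx => ?_⟩⟩
  by_contra hyW
  obtain ⟨x', hx'W, hyx', hx'⟩ := exists_specializes_forall_specializes_eq (A := W.1ᶜ) hyW
  have : x' ∈ insert x W.1 := hcover x hxW hx ▸ hcover x' hx'W hx' ▸ Set.mem_insert x' W.1
  obtain rfl : x' = x := this.resolve_right hx'W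
  exact hyx hyx'

theorem setOf_not_specializes_injective [T0Space X] :
    Function.Injective fun x : X => {y | ¬y ⤳ x} := by
  intro a b hab
  have h := Set.ext_iff.mp hab
  have hab' : a ⤳ b := not_not.mp fun h' => (h a).mpr h' specializes_rfl
  have hba : b ⤳ a := not_not.mp fun h' => (h b).mp h' specializes_rfl
  exact (hab'.antisymm hba).eq

noncomputable def equivSpecializationStableSetUniqueCover (X : Type*) [TopologicalSpace X]
    [TopologicalSpace.NoetherianSpace X] [T0Space X] :
    X ≃ {W : SpecializationStableSet X // ∃! V, Minimal (W < ·) V} :=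
  Equiv.ofBijective
    (fun x => ⟨⟨_, stableUnderSpecialization_setOf_not_specializes x⟩,
      existsUnique_minimal_lt_setOf_not_specializes x⟩)
    ⟨fun _ _ hab => setOf_not_specializes_injective (congrArg (·.1.1) hab),
      fun W => (exists_eq_setOf_not_specializes W.2).imp fun _ hx =>
        Subtype.ext (Subtype.ext hx.symm)⟩

open TopologicalSpace in
theorem TopologicalSpace.NoetherianSpace.eq_generateFrom_range_compl [NoetherianSpace X]
    {ι : Type*} {F : ι → Set X} (hF : ∀ i, IsClosed (F i))
    (hirr : ∀ Z, IsIrreducible Z → IsClosed Z → ∃ i, F i = Z) :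
    ‹TopologicalSpace X› = generateFrom (Set.range fun i => (F i)ᶜ) := by
  refine le_antisymm (le_generateFrom_iff_subset_isOpen.mpr ?_) (TopologicalSpace.le_def.mpr ?_)
  · rintro _ ⟨i, rfl⟩
    exact (hF i).isOpen_compl
  · intro U hU
    obtain ⟨S, hS, hUS⟩ := exists_finset_irreducible ⟨Uᶜ, hU.isClosed_compl⟩
    have : U = ⋂ k ∈ S, (k : Set X)ᶜ := by
      have hU' := congrArg ((↑) : Closeds X → Set X) hUS
      simp only [Closeds.coe_finset_sup, Finset.sup_set_eq_biUnion] at hU'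
      rw [← Set.compl_iUnion₂, ← compl_compl U]
      exact congrArg compl hU'
    rw [this]
    refine @isOpen_biInter_finset _ _ (generateFrom _) _ _ fun k hk => ?_
    obtain ⟨i, hi⟩ := hirr k (hS ⟨k, hk⟩) k.2
    exact isOpen_generateFrom_of_mem ⟨i, congrArg compl hi⟩

end Specialization

section Classifying

variable {C} {X : Type*} [TopologicalSpace X]

structure ClassifiesThickSubcats (σ : C → Set X) : Prop where
  isClosed : ∀ M : C, IsClosed (σ M)
  stableUnderSpecialization_iUnion :
    ∀ Tk : ThickSubcat C, StableUnderSpecialization (⋃ M ∈ Tk.set, σ M)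
  setOf_subset_iUnion_eq : ∀ Tk : ThickSubcat C, {M : C | σ M ⊆ ⋃ N ∈ Tk.set, σ N} = Tk.set
  exists_thickSubcat : ∀ W : Set X, StableUnderSpecialization W →
    ∃ Tk : ThickSubcat C, Tk.set = {M : C | σ M ⊆ W} ∧ (⋃ M ∈ Tk.set, σ M) = W

namespace ClassifiesThickSubcats

variable {σ : C → Set X}

noncomputable def thickSubcatOrderIso (hσ : ClassifiesThickSubcats σ) :
    ThickSubcat C ≃o SpecializationStableSet X where
  toFun Tk := ⟨_, hσ.stableUnderSpecialization_iUnion Tk⟩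
  invFun W := (hσ.exists_thickSubcat W.1 W.2).choose
  left_inv Tk := ThickSubcat.set_injective C <|
    (hσ.exists_thickSubcat _ (hσ.stableUnderSpecialization_iUnion Tk)).choose_spec.1.trans
      (hσ.setOf_subset_iUnion_eq Tk)
  right_inv W := Subtype.ext (hσ.exists_thickSubcat W.1 W.2).choose_spec.2
  map_rel_iff' {Tk Tk'} := by
    change (⋃ M ∈ Tk.set, σ M) ⊆ ⋃ M ∈ Tk'.set, σ M ↔ Tk.set ⊆ Tk'.set
    exact ⟨fun h M hM =>
      hσ.setOf_subset_iUnion_eq Tk' ▸ (Set.subset_biUnion_of_mem hM).trans h,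
      Set.biUnion_subset_biUnion_left⟩

theorem thickSubcatOrderIso_symm_apply_set (hσ : ClassifiesThickSubcats σ)
    (W : SpecializationStableSet X) :
    (hσ.thickSubcatOrderIso.symm W).set = {M | σ M ⊆ W.1} :=
  (hσ.exists_thickSubcat W.1 W.2).choose_spec.1

theorem exists_eq_of_isIrreducible [QuasiSober X] (hσ : ClassifiesThickSubcats σ) {Z : Set X}
    (hZ : IsIrreducible Z) (hZc : IsClosed Z) : ∃ M, σ M = Z := by
  obtain ⟨Tk, hset, hsupp⟩ := hσ.exists_thickSubcat Z hZc.stableUnderSpecialization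
  obtain ⟨p, hp⟩ := QuasiSober.sober hZ hZc
  obtain ⟨M, hM, hpM⟩ := Set.mem_iUnion₂.mp (hsupp ▸ hp.mem)
  have hMZ : σ M ⊆ Z := by rwa [hset] at hM
  exact ⟨M, hMZ.antisymm fun y hy =>
    (hp.specializes_iff_mem.mpr hy).mem_closed (hσ.isClosed M) hpM⟩

end ClassifiesThickSubcats

end Classifying

theorem stmt12
    (X : Type*) [TopologicalSpace X] [TopologicalSpace.NoetherianSpace X]
    [QuasiSober X] [T0Space X]
    (σ : C → Set X)
    (hclosed : ∀ M : C, IsClosed (σ M))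
    (hspcl : ∀ Tk : ThickSubcat C, StableUnderSpecialization (⋃ M ∈ Tk.set, σ M))
    (hinv1 : ∀ Tk : ThickSubcat C, {M : C | σ M ⊆ ⋃ N ∈ Tk.set, σ N} = Tk.set)
    (hinv2 : ∀ W : Set X, StableUnderSpecialization W →
        ∃ Tk : ThickSubcat C, Tk.set = {M : C | σ M ⊆ W} ∧ (⋃ M ∈ Tk.set, σ M) = W) :
    ∃ φ : X ≃ₜ SpecTri C,
      (∀ x : X, (φ x).1.set = {M : C | σ M ⊆ {x' : X | x ∉ closure {x'}}}) ∧
      (∀ x : X, (φ x).1.set = {M : C | x ∉ σ M}) ∧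
      (∀ M : C, ⇑φ ⁻¹' suppObj C M = σ M) := by
  have hσ : ClassifiesThickSubcats σ := ⟨hclosed, hspcl, hinv1, hinv2⟩
  let e := hσ.thickSubcatOrderIso
  let φ : X ≃ SpecTri C := (equivSpecializationStableSetUniqueCover X).trans
    (e.symm.toEquiv.subtypeEquiv fun W => (e.symm.existsUnique_minimal_lt_iff W).symm)
  have hφ (x : X) : (φ x).1.set = {M | σ M ⊆ {y | ¬y ⤳ x}} :=
    hσ.thickSubcatOrderIso_symm_apply_set _
  have hφ' (x : X) : (φ x).1.set = {M | x ∉ σ M} :=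
    (hφ x).trans (Set.ext fun M => (hclosed M).subset_setOf_not_specializes_iff x)
  have hpre (M : C) : φ ⁻¹' suppObj C M = σ M := Set.ext fun x => by simp [suppObj, hφ']
  refine ⟨φ.toHomeomorphOfIsInducing ⟨?_⟩, fun x => ?_, hφ', hpre⟩
  · show _ = TopologicalSpace.induced φ (TopologicalSpace.generateFrom _)
    rw [induced_generateFrom_eq]
    convert TopologicalSpace.NoetherianSpace.eq_generateFrom_range_compl hclosed
      (fun _ => hσ.exists_eq_of_isIrreducible)
    ext
    simp [hpre]
  · exact (hφ x).trans (by simp only [specializes_iff_mem_closure])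
end

section
/- Let T be a triangulated category admitting a classifying support data (X, σ), and let x ∈ X. Then σ^{-1}({x' ∈ X | x ∉ closure({x'})}) is a prime thick subcategory of T. -/
open CategoryTheory Limits Pretriangulated

universe v u

variable (C : Type u) [Category.{v} C] [Preadditive C] [HasZeroObject C]
  [HasShift C ℤ] [∀ n : ℤ, (shiftFunctor C n).Additive] [Pretriangulated C]

/-- Let `T` admit a classifying support data `(X, σ)` and let `x ∈ X`. Then
`σ⁻¹({x' ∈ X | x ∉ closure {x'}})` is a prime thick subcategory of `T`. -/
theorem stmt13 [HasBinaryBiproducts C]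
    (X : Type*) [TopologicalSpace X] [TopologicalSpace.NoetherianSpace X]
    [QuasiSober X] [T0Space X]
    (σ : C → Set X)
    (hclosed : ∀ M : C, IsClosed (σ M))
    (hzero : ∀ M : C, IsZero M → σ M = ∅)
    (hshift : ∀ (M : C) (n : ℤ), σ (M⟦n⟧) = σ M)
    (htri : ∀ T : Triangle C, T ∈ (distTriang C) → σ T.obj₂ ⊆ σ T.obj₁ ∪ σ T.obj₃)
    (hsum : ∀ M N : C, σ (M ⊞ N) = σ M ∪ σ N)
    (hspcl : ∀ Tk : ThickSubcat C, StableUnderSpecialization (⋃ M ∈ Tk.set, σ M))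
    (hinv1 : ∀ Tk : ThickSubcat C, {M : C | σ M ⊆ ⋃ N ∈ Tk.set, σ N} = Tk.set)
    (hinv2 : ∀ W : Set X, StableUnderSpecialization W →
        ∃ Tk : ThickSubcat C, Tk.set = {M : C | σ M ⊆ W} ∧ (⋃ M ∈ Tk.set, σ M) = W)
    (x : X) :
    ∃ P : ThickSubcat C,
      P.set = {M : C | σ M ⊆ {x' : X | x ∉ closure {x'}}} ∧ IsPrimeThick C P := by
  set W : Set X := {x' : X | x ∉ closure {x'}} with hWdef
  have hWspec : StableUnderSpecialization W := by
    intro a b hab ha hb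
    exact ha (specializes_iff_mem_closure.mp
      (hab.trans (specializes_iff_mem_closure.mpr hb)))
  obtain ⟨P, hP1, hP2⟩ := hinv2 W hWspec
  have hxW : x ∉ W := fun h => h (subset_closure rfl)
  set W' : Set X := W ∪ closure {x} with hW'def
  have hW'spec : StableUnderSpecialization W' :=
    fun a b hab h => h.imp (hWspec hab) (fun hx => specializes_iff_mem_closure.mp ((specializes_iff_mem_closure.mpr hx).trans hab))
  obtain ⟨Q, hQ1, hQ2⟩ := hinv2 W' hW'spec
  have hle : ∀ {A B : ThickSubcat C}, A ≤ B ↔ A.set ⊆ B.set := Iff.rfl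
  have hxW' : x ∈ W' := Or.inr (subset_closure rfl)
  have hPQne : P ≠ Q := by
    intro h
    rw [h, hQ2] at hP2
    exact hxW (hP2 ▸ hxW')
  have hPQ : P < Q := by
    refine lt_of_le_of_ne (hle.mpr ?_) hPQne
    rw [hP1, hQ1]
    exact fun M hM => hM.trans Set.subset_union_left
  -- Key: for any R with P < R, Q.set ⊆ R.set
  have key : ∀ R : ThickSubcat C, P < R → Q.set ⊆ R.set := by
    intro R hPR
    set U : Set X := ⋃ M ∈ R.set, σ M with hUdef
    have hUspec : StableUnderSpecialization U := hspcl R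
    have hWU : W ⊆ U := by
      rw [← hP2]
      exact Set.biUnion_subset_biUnion_left (hle.mp hPR.le)
    have hWneU : W ≠ U := by
      intro h
      apply hPR.ne
      apply ThickSubcat.set_injective
      rw [hP1, ← hinv1 R, ← hUdef, ← h]
    obtain ⟨z, hzU, hzW⟩ := Set.exists_of_ssubset (hWU.ssubset_of_ne hWneU)
    have hzx : z ⤳ x := specializes_iff_mem_closure.mpr (not_not.mp hzW)
    have hxU : x ∈ U := hUspec hzx hzU
    have hW'U : W' ⊆ U := by
      rintro y (hy | hy)
      · exact hWU hy
      · exact hUspec (specializes_iff_mem_closure.mpr hy) hxU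
    rw [hQ1, ← hinv1 R, ← hUdef]
    exact fun M hM => hM.trans hW'U
  refine ⟨P, hP1, Q, ⟨hPQ, fun R hPR hRQ => hle.mpr (key R hPR)⟩, fun R hR => ?_⟩
  exact le_antisymm (hR.2 hPQ (hle.mpr (key R hR.1))) (hle.mpr (key R hR.1))
end

section
/- Let T be an essentially small triangulated category. For a thick subcategory X of T define Supp△(X) = ∪_{M∈X} Supp△(M) ⊆ Spec△(T), and for a subset W ⊆ Spec△(T) define Supp△^{-1}(W) = {M ∈ T | Supp△(M) ⊆ W}, and define the radical √X as the intersection of all prime thick subcategories containing X. Then Supp△ and Supp△^{-1} are mutually inverse, inclusion-preserving bijections between the set of radical thick subcategories of T and the set {Supp△(X) | X a thick subcategory of T}. -/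
open CategoryTheory Limits Pretriangulated

universe v u

variable (C : Type u) [Category.{v} C] [Preadditive C] [HasZeroObject C]
  [HasShift C ℤ] [∀ n : ℤ, (shiftFunctor C n).Additive] [Pretriangulated C]

/-- `Supp△(X) = ⋃_{M ∈ X} Supp△(M) ⊆ Spec△(T)` for a thick subcategory `X`. -/
def SuppTh (Tk : ThickSubcat C) : Set (SpecTri C) := ⋃ M ∈ Tk.set, suppObj C M

/-- A thick subcategory is radical if it equals the intersection of all prime thick
subcategories containing it. -/
def IsRadicalThick (Tk : ThickSubcat C) : Prop :=
  Tk.set = {M : C | ∀ P : SpecTri C, Tk.set ⊆ P.1.set → M ∈ P.1.set}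

lemma mem_suppTh_iff (Tk : ThickSubcat C) (P : SpecTri C) :
    P ∈ SuppTh C Tk ↔ ¬ Tk.set ⊆ P.1.set := by
  simp only [SuppTh, Set.mem_iUnion, suppObj, Set.mem_setOf_eq, Set.not_subset]
  tauto

lemma supp_subset_iff (Tk : ThickSubcat C) (M : C) :
    suppObj C M ⊆ SuppTh C Tk ↔ ∀ P : SpecTri C, Tk.set ⊆ P.1.set → M ∈ P.1.set := by
  constructor
  · intro h P hP
    by_contra hM
    exact (mem_suppTh_iff C Tk P).1 (h hM) hP
  · intro h P hP
    rw [mem_suppTh_iff]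
    intro hsub
    exact hP (h P hsub)

/-- The radical of a thick subcategory. -/
def radicalThick (Tk : ThickSubcat C) : ThickSubcat C where
  set := {M : C | ∀ P : SpecTri C, Tk.set ⊆ P.1.set → M ∈ P.1.set}
  mem_of_iso := fun e h P hP => P.1.mem_of_iso e (h P hP)
  zero_mem := fun Z hZ P _ => P.1.zero_mem Z hZ
  shift_mem := fun X n h P hP => P.1.shift_mem X n (h P hP)
  ext_mem := fun T hT h1 h3 P hP => P.1.ext_mem T hT (h1 P hP) (h3 P hP)
  summand_mem := fun X Y i r hir h P hP => P.1.summand_mem X Y i r hir (h P hP)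

lemma subset_radical (Tk : ThickSubcat C) : Tk.set ⊆ (radicalThick C Tk).set :=
  fun _ hM P hP => hP hM

lemma radical_subset_iff (Tk : ThickSubcat C) (P : SpecTri C) :
    (radicalThick C Tk).set ⊆ P.1.set ↔ Tk.set ⊆ P.1.set := by
  constructor
  · intro h; exact (subset_radical C Tk).trans h
  · intro h M hM; exact hM P h

lemma radical_isRadical (Tk : ThickSubcat C) : IsRadicalThick C (radicalThick C Tk) := by
  apply Set.Subset.antisymm
  · intro M hM P hP
    exact hM P ((radical_subset_iff C Tk P).1 hP)
  · intro M hM P hP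
    exact hM P ((radical_subset_iff C Tk P).2 hP)

lemma suppTh_radical (Tk : ThickSubcat C) : SuppTh C (radicalThick C Tk) = SuppTh C Tk := by
  ext P
  rw [mem_suppTh_iff, mem_suppTh_iff, radical_subset_iff]

/-- `Supp△` and `Supp△⁻¹` are mutually inverse, inclusion-preserving bijections between
the radical thick subcategories of `T` and the parameter set
`{Supp△(X) | X a thick subcategory of T}`. -/
theorem stmt17 :
    (∀ Tk : ThickSubcat C, IsRadicalThick C Tk →
      {M : C | suppObj C M ⊆ SuppTh C Tk} = Tk.set) ∧
    (∀ Tk : ThickSubcat C, ∃ Tk' : ThickSubcat C, IsRadicalThick C Tk' ∧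
      Tk'.set = {M : C | suppObj C M ⊆ SuppTh C Tk} ∧ SuppTh C Tk' = SuppTh C Tk) ∧
    (∀ Tk1 Tk2 : ThickSubcat C, IsRadicalThick C Tk1 → IsRadicalThick C Tk2 →
      (Tk1 ≤ Tk2 ↔ SuppTh C Tk1 ⊆ SuppTh C Tk2)) := by
  refine ⟨fun Tk hTk => ?_, fun Tk => ⟨radicalThick C Tk, radical_isRadical C Tk, ?_,
    suppTh_radical C Tk⟩, fun Tk1 Tk2 h1 h2 => ⟨fun hle P hP => ?_, fun hs => ?_⟩⟩
  · ext M
    rw [Set.mem_setOf_eq, supp_subset_iff]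
    conv_rhs => rw [hTk]
    rfl
  · ext M
    rw [Set.mem_setOf_eq, supp_subset_iff]
    rfl
  · rw [mem_suppTh_iff] at hP ⊢
    exact fun hsub => hP (Set.Subset.trans hle hsub)
  · intro M hM
    rw [h2]
    intro P hP
    have : SuppTh C Tk1 ⊆ SuppTh C Tk2 := hs
    have h1P : Tk1.set ⊆ P.1.set := by
      by_contra hc
      exact (mem_suppTh_iff C Tk2 P).1 (this ((mem_suppTh_iff C Tk1 P).2 hc)) hP
    exact h1P hM
end

section
/- Let R be a commutative noetherian ring and p a prime ideal. For every bounded complex P of finitely generated free R_p-modules, there exists a bounded complex P~ of finitely generated free R-modules such that the localization (P~)_p is isomorphic to P as complexes of R_p-modules. -/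
/-!
Fix bases of the `P i`, so that each `P i` is the localization of a finite free `R`-module
`Q i`. Each differential lifts to `Q` after multiplying by some `s i ∈ R \ p`, and a composite of
two consecutive lifts, which vanishes after localization, is killed by some `t i ∈ R \ p`.
Rescaling the lifts by suitable products of the `s j` and `t j` over the finitely many nonzero
degrees makes them a complex whose localization is `u • dP` for a single `u ∈ R \ p`;
composing the comparison maps in degree `i` with multiplication by `u ^ (-i)` absorbs this
factor.
-/

section Rescaling

variable {R : Type*} [CommSemiring R] {M N : ℤ → Type*} [∀ i, AddCommMonoid (M i)]
  [∀ i, Module R (M i)] [∀ i, AddCommMonoid (N i)] [∀ i, Module R (N i)]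
  {f : ∀ i, M i →ₗ[R] N i} {δ : ∀ i, N i →ₗ[R] N (i + 1)}

theorem exists_complex_of_comp_eq_smul (K : Finset ℤ) (g : ∀ i, M i →ₗ[R] M (i + 1))
    (s t : ℤ → R) (hg : ∀ i, f (i + 1) ∘ₗ g i = s i • (δ i ∘ₗ f i))
    (ht : ∀ i, t i • (g (i + 1) ∘ₗ g i) = 0) (hδ : ∀ i ∉ K, δ i = 0) :
    ∃ d : ∀ i, M i →ₗ[R] M (i + 1), (∀ i, d (i + 1) ∘ₗ d i = 0) ∧
      ∀ i, f (i + 1) ∘ₗ d i = (∏ j ∈ K, t j * s j) • (δ i ∘ₗ f i) := by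
  classical
  -- `c i * s i` is the same for all `i ∈ K`, and every `t j` divides every `c i`.
  set c : ℤ → R := fun i => (∏ j ∈ K, t j) * ∏ j ∈ K.erase i, s j
  refine ⟨fun i => if i ∈ K then c i • g i else 0, fun i => ?_, fun i => ?_⟩
  · by_cases hi : i ∈ K
    · by_cases hi1 : i + 1 ∈ K
      · obtain ⟨r, hr⟩ : t i ∣ ∏ j ∈ K, t j := Finset.dvd_prod_of_mem t hi
        have hc : c i * c (i + 1) = (r * (∏ j ∈ K.erase (i + 1), s j) * c i) * t i := by
          simp only [c, hr]; ring
        simp only [if_pos hi, if_pos hi1, LinearMap.smul_comp, LinearMap.comp_smul, smul_smul]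
        rw [hc, mul_smul, ht, smul_zero]
      · simp [hi1]
    · simp [hi]
  · by_cases hi : i ∈ K
    · simp only [if_pos hi, LinearMap.comp_smul, hg, smul_smul, c]
      rw [Finset.prod_mul_distrib, mul_assoc, Finset.prod_erase_mul _ _ hi]
    · simp [hi, hδ i hi]

end Rescaling

theorem exists_linearEquiv_comm_of_comm_smul {A : Type*} [CommSemiring A] {M N : ℤ → Type*}
    [∀ i, AddCommMonoid (M i)] [∀ i, Module A (M i)] [∀ i, AddCommMonoid (N i)]
    [∀ i, Module A (N i)] (φ : ∀ i, M i ≃ₗ[A] N i) (f : ∀ i, M i → M (i + 1))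
    (g : ∀ i, N i →ₗ[A] N (i + 1)) (w : Aˣ) (h : ∀ i x, φ (i + 1) (f i x) = w • g i (φ i x)) :
    ∃ ψ : ∀ i, M i ≃ₗ[A] N i, ∀ i x, ψ (i + 1) (f i x) = g i (ψ i x) := by
  refine ⟨fun i => (φ i).trans (LinearEquiv.smulOfUnit (w ^ (-i))), fun i x => ?_⟩
  have hw : w ^ (-(i + 1)) * w = w ^ (-i) := by
    rw [← zpow_add_one, neg_add, neg_add_cancel_right]
  change w ^ (-(i + 1)) • φ (i + 1) (f i x) = g i (w ^ (-i) • φ i x)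
  rw [h, smul_smul, hw, Units.smul_def, Units.smul_def, map_smul]

theorem eq_zero_of_notMem_Ico {A : Type*} [Semiring A] {P : ℤ → Type*}
    [∀ i, AddCommMonoid (P i)] [∀ i, Module A (P i)] {a b : ℤ}
    (hP : ∀ i, i < a ∨ b < i → Subsingleton (P i)) (d : ∀ i, P i →ₗ[A] P (i + 1)) {i : ℤ}
    (hi : i ∉ Finset.Ico a b) : d i = 0 := by
  rw [Finset.mem_Ico, not_and_or, not_le, not_lt] at hi
  ext x
  rcases hi with hi | hi
  · have := hP i (.inl hi)
    rw [Subsingleton.elim x 0, map_zero, LinearMap.zero_apply]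
  · have := hP (i + 1) (.inr (by omega))
    exact Subsingleton.elim _ _

section Localization

variable {R : Type*} [CommRing R] (S : Submonoid R)

theorem IsLocalizedModule.exists_complex_lift {M N : ℤ → Type*} [∀ i, AddCommGroup (M i)]
    [∀ i, Module R (M i)] [∀ i, AddCommGroup (N i)] [∀ i, Module R (N i)]
    (f : ∀ i, M i →ₗ[R] N i) [∀ i, IsLocalizedModule S (f i)]
    [∀ i, Module.FinitePresentation R (M i)] (δ : ∀ i, N i →ₗ[R] N (i + 1))
    (hδδ : ∀ i, δ (i + 1) ∘ₗ δ i = 0) (K : Finset ℤ) (hδ : ∀ i ∉ K, δ i = 0) :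
    ∃ (d : ∀ i, M i →ₗ[R] M (i + 1)) (u : S), (∀ i, d (i + 1) ∘ₗ d i = 0) ∧
      ∀ i, f (i + 1) ∘ₗ d i = (u : R) • (δ i ∘ₗ f i) := by
  choose g s hg using fun i =>
    Module.FinitePresentation.exists_lift_of_isLocalizedModule S (f (i + 1)) (δ i ∘ₗ f i)
  have hgg (i : ℤ) : f (i + 1 + 1) ∘ₗ (g (i + 1) ∘ₗ g i) = f (i + 1 + 1) ∘ₗ 0 := by
    rw [← LinearMap.comp_assoc, hg, LinearMap.smul_comp, LinearMap.comp_assoc, hg,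
      LinearMap.comp_smul, ← LinearMap.comp_assoc, hδδ]
    simp
  choose t ht using fun i =>
    Module.Finite.exists_smul_of_comp_eq_of_isLocalizedModule S (f (i + 1 + 1)) _ _ (hgg i)
  obtain ⟨d, hdd, hd⟩ := exists_complex_of_comp_eq_smul K g (fun i => s i) (fun i => t i)
    hg (fun i => by simpa [Submonoid.smul_def] using ht i) hδ
  exact ⟨d, ∏ j ∈ K, t j * s j, hdd, by simpa using hd⟩

theorem IsLocalizedModule.iso_map_eq_smul {M M' N N' : Type*} [AddCommMonoid M] [Module R M]
    [AddCommMonoid M'] [Module R M'] [AddCommMonoid N] [Module R N] [AddCommMonoid N']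
    [Module R N'] (f : M →ₗ[R] N) (f' : M' →ₗ[R] N') [IsLocalizedModule S f]
    [IsLocalizedModule S f'] {d : M →ₗ[R] M'} {δ : N →ₗ[R] N'} {r : R}
    (h : f' ∘ₗ d = r • (δ ∘ₗ f)) (x : LocalizedModule S M) :
    iso S f' (map S (LocalizedModule.mkLinearMap S M) (LocalizedModule.mkLinearMap S M') d x) =
      r • δ (iso S f x) := by
  suffices (iso S f').toLinearMap ∘ₗ
      map S (LocalizedModule.mkLinearMap S M) (LocalizedModule.mkLinearMap S M') d =
      r • (δ ∘ₗ (iso S f).toLinearMap) from LinearMap.congr_fun this x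
  refine ext S (LocalizedModule.mkLinearMap S M) (map_units f') (LinearMap.ext fun m => ?_)
  simpa [iso_mk_one, map_LocalizedModules] using LinearMap.congr_fun h m

theorem IsLocalizedModule.exists_linearEquiv_map_comm {M N : ℤ → Type*}
    [∀ i, AddCommMonoid (M i)] [∀ i, Module R (M i)] [∀ i, AddCommMonoid (N i)]
    [∀ i, Module R (N i)] [∀ i, Module (Localization S) (N i)]
    [∀ i, IsScalarTower R (Localization S) (N i)] (f : ∀ i, M i →ₗ[R] N i)
    [∀ i, IsLocalizedModule S (f i)] (δ : ∀ i, N i →ₗ[Localization S] N (i + 1))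
    (d : ∀ i, M i →ₗ[R] M (i + 1)) (u : S)
    (hd : ∀ i, f (i + 1) ∘ₗ d i = (u : R) • ((δ i).restrictScalars R ∘ₗ f i)) :
    ∃ e : ∀ i, LocalizedModule S (M i) ≃ₗ[Localization S] N i, ∀ i x,
      e (i + 1) (map S (LocalizedModule.mkLinearMap S (M i))
        (LocalizedModule.mkLinearMap S (M (i + 1))) (d i) x) = δ i (e i x) := by
  have hu := IsLocalization.map_units (Localization S) u
  refine exists_linearEquiv_comm_of_comm_smul
    (fun i => LinearEquiv.extendScalarsOfIsLocalization S _ (iso S (f i))) _ δ hu.unit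
    fun i x => ?_
  rw [Units.smul_def, hu.unit_spec, algebraMap_smul]
  exact iso_map_eq_smul S (f i) (f (i + 1)) (hd i) x

end Localization

theorem stmt18_general (R : Type) [CommRing R] (p : Ideal R) [p.IsPrime]
    (P : ℤ → ModuleCat (Localization.AtPrime p))
    (dP : ∀ i : ℤ, P i →ₗ[Localization.AtPrime p] P (i + 1))
    (hPsq : ∀ (i : ℤ) (x : P i), dP (i + 1) (dP i x) = 0)
    (hPfree : ∀ i : ℤ, Module.Free (Localization.AtPrime p) (P i))
    (hPfg : ∀ i : ℤ, Module.Finite (Localization.AtPrime p) (P i))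
    (a b : ℤ) (hPbdd : ∀ i : ℤ, i < a ∨ b < i → Subsingleton (P i)) :
    ∃ (Q : ℤ → ModuleCat R) (dQ : ∀ i : ℤ, Q i →ₗ[R] Q (i + 1)),
      (∀ (i : ℤ) (x : Q i), dQ (i + 1) (dQ i x) = 0) ∧
      (∀ i : ℤ, Module.Free R (Q i)) ∧
      (∀ i : ℤ, Module.Finite R (Q i)) ∧
      (∃ a' b' : ℤ, ∀ i : ℤ, i < a' ∨ b' < i → Subsingleton (Q i)) ∧
      ∃ e : ∀ i : ℤ, LocalizedModule p.primeCompl (Q i) ≃ₗ[Localization.AtPrime p] P i,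
        ∀ (i : ℤ) (x : LocalizedModule p.primeCompl (Q i)),
          e (i + 1)
            ((IsLocalizedModule.map p.primeCompl
                (LocalizedModule.mkLinearMap p.primeCompl (Q i))
                (LocalizedModule.mkLinearMap p.primeCompl (Q (i + 1))) (dQ i)) x)
            = dP i (e i x) := by
  set A := Localization.AtPrime p
  have := hPfree
  have := hPfg
  let n i := Module.finrank A (P i)
  let B i := Module.finBasis A (P i)
  -- `u_2` is the universe of `Q` in the statement.
  let M i := ULift.{u_2} (Fin (n i) →₀ R)
  let L i : M i →ₗ[R] Fin (n i) →₀ A :=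
    Finsupp.mapRange.linearMap (Algebra.linearMap R A) ∘ₗ ULift.moduleEquiv.toLinearMap
  have (i : ℤ) : IsLocalizedModule p.primeCompl (L i) :=
    IsLocalizedModule.of_linearEquiv_right _ _ _
  have (i : ℤ) : Module.FinitePresentation R (M i) := Module.finitePresentation_of_projective _ _
  let δ i : (Fin (n i) →₀ A) →ₗ[A] Fin (n (i + 1)) →₀ A :=
    (B (i + 1)).repr.toLinearMap ∘ₗ dP i ∘ₗ (B i).repr.symm.toLinearMap
  have hδδ (i : ℤ) : (δ (i + 1)).restrictScalars R ∘ₗ (δ i).restrictScalars R = 0 := by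
    ext; simp [δ, hPsq]
  obtain ⟨d, u, hdd, hd⟩ := IsLocalizedModule.exists_complex_lift p.primeCompl L
    (fun i => (δ i).restrictScalars R) hδδ (Finset.Ico a b)
    fun i hi => by simp [δ, eq_zero_of_notMem_Ico hPbdd dP hi]
  obtain ⟨e, he⟩ := IsLocalizedModule.exists_linearEquiv_map_comm p.primeCompl L δ d u hd
  refine ⟨fun i => ModuleCat.of R (M i), d, fun i => LinearMap.congr_fun (hdd i),
    fun i => inferInstanceAs (Module.Free R (M i)),
    fun i => inferInstanceAs (Module.Finite R (M i)),
    ⟨a, b, fun i hi => ?_⟩, fun i => (e i).trans (B i).repr.symm, fun i x => by simp [he, δ]⟩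
  have := hPbdd i hi
  have : IsEmpty (Fin (n i)) := by
    rw [show n i = 0 from Module.finrank_zero_of_subsingleton]
    infer_instance
  exact inferInstanceAs (Subsingleton (ULift _))

/-- Let `R` be a commutative noetherian ring and `p` a prime ideal. For every bounded
complex `P` of finitely generated free `R_p`-modules, there exists a bounded complex `Q`
of finitely generated free `R`-modules whose localization `Q_p` is isomorphic to `P` as
complexes of `R_p`-modules: there are `R_p`-linear isomorphisms
`e i : (Q i)_p ≃ P i` commuting with the differentials. -/
theorem stmt18 (R : Type) [CommRing R] [IsNoetherianRing R] (p : Ideal R) [p.IsPrime]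
    (P : ℤ → ModuleCat (Localization.AtPrime p))
    (dP : ∀ i : ℤ, P i →ₗ[Localization.AtPrime p] P (i + 1))
    (hPsq : ∀ (i : ℤ) (x : P i), dP (i + 1) (dP i x) = 0)
    (hPfree : ∀ i : ℤ, Module.Free (Localization.AtPrime p) (P i))
    (hPfg : ∀ i : ℤ, Module.Finite (Localization.AtPrime p) (P i))
    (a b : ℤ) (hPbdd : ∀ i : ℤ, i < a ∨ b < i → Subsingleton (P i)) :
    ∃ (Q : ℤ → ModuleCat R) (dQ : ∀ i : ℤ, Q i →ₗ[R] Q (i + 1)),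
      (∀ (i : ℤ) (x : Q i), dQ (i + 1) (dQ i x) = 0) ∧
      (∀ i : ℤ, Module.Free R (Q i)) ∧
      (∀ i : ℤ, Module.Finite R (Q i)) ∧
      (∃ a' b' : ℤ, ∀ i : ℤ, i < a' ∨ b' < i → Subsingleton (Q i)) ∧
      ∃ e : ∀ i : ℤ, LocalizedModule p.primeCompl (Q i) ≃ₗ[Localization.AtPrime p] P i,
        ∀ (i : ℤ) (x : LocalizedModule p.primeCompl (Q i)),
          e (i + 1)
            ((IsLocalizedModule.map p.primeCompl
                (LocalizedModule.mkLinearMap p.primeCompl (Q i))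
                (LocalizedModule.mkLinearMap p.primeCompl (Q (i + 1))) (dQ i)) x)
            = dP i (e i x) :=
  stmt18_general R p P dP hPsq hPfree hPfg a b hPbdd
end
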